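/- arXiv:1208.4544 — 2 statements merged into one kernel-verified Lean document; each statement's English description precedes it below -/
import Mathlib

section
/- Let A, A0 be real n×n matrices such that the pair (A, A0) satisfies hypothesis (H0) with constants (c0, c1). Let P be an n×n_c matrix and I_1, …, I_{N_s} be n×n_k matrices, each of full column rank, whose column spaces together span ℝⁿ. Set A_c = PᵀAP, A_k = I_kᵀAI_k, A_c⁽⁰⁾ = PᵀA0P, A_k⁽⁰⁾ = I_kᵀA0I_k (all invertible), and define the additive Schwarz operators C = P A_c⁻¹ Pᵀ + Σ_{k=1}^{N_s} I_k A_k⁻¹ I_kᵀ and C0 = P (A_c⁽⁰⁾)⁻¹ Pᵀ + Σ_{k=1}^{N_s} I_k (A_k⁽⁰⁾)⁻¹ I_kᵀ. Then C0 is symmetric positive definite and the pair (C, C0) satisfies hypothesis (H0) with constants (c0/c1², 1/c0). -/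
/-!
Hypothesis (H0) is stable under the three operations that build an additive Schwarz operator:
congruence `M ↦ Eᵀ * M * E` (same constants), sums of pairs whose second matrices are positive
semidefinite (Cauchy–Schwarz for sums of square roots), and inversion, which turns `(c₀, c₁)` into
`(c₀ / c₁ ^ 2, 1 / c₀)`. For inversion write `x = M u`: then `x ⬝ M⁻¹ x = u ⬝ M u`, and
coercivity and boundedness of `M`, together with the duality `z ⬝ x ≤ ‖z‖_N ‖x‖_{N⁻¹}`, give
`c₀ ‖u‖_N ≤ ‖x‖_{N⁻¹} ≤ c₁ ‖u‖_N`.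

Each term `E (Eᵀ A₀ E)⁻¹ Eᵀ` of `C₀` is positive semidefinite and its quadratic form vanishes only
on vectors orthogonal to the range of `E`; as these ranges span, `C₀` is positive definite.
-/

open Matrix

namespace Matrix

variable {ι κ σ : Type*} [Fintype ι] [Fintype κ]

lemma dotProduct_transpose_mul_mul_mulVec {R : Type*} [CommSemiring R]
    (E : Matrix ι κ R) (M : Matrix ι ι R) (x y : κ → R) :
    y ⬝ᵥ (Eᵀ * M * E) *ᵥ x = E *ᵥ y ⬝ᵥ M *ᵥ (E *ᵥ x) := by
  rw [← mulVec_mulVec, ← mulVec_mulVec, dotProduct_transpose_mulVec, dotProduct_comm]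

lemma dotProduct_mul_mul_transpose_mulVec {R : Type*} [CommSemiring R]
    (E : Matrix ι κ R) (M : Matrix κ κ R) (x y : ι → R) :
    y ⬝ᵥ (E * M * Eᵀ) *ᵥ x = Eᵀ *ᵥ y ⬝ᵥ M *ᵥ (Eᵀ *ᵥ x) := by
  simpa only [transpose_transpose] using dotProduct_transpose_mul_mul_mulVec Eᵀ M x y

lemma PosSemidef.dotProduct_mulVec_self_nonneg {M : Matrix ι ι ℝ} (hM : M.PosSemidef)
    (x : ι → ℝ) : 0 ≤ x ⬝ᵥ M *ᵥ x := by
  simpa using hM.dotProduct_mulVec_nonneg x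

lemma PosSemidef.dotProduct_mulVec_le_sqrt_mul_sqrt {M : Matrix ι ι ℝ} (hM : M.PosSemidef)
    (x y : ι → ℝ) : x ⬝ᵥ M *ᵥ y ≤ √(x ⬝ᵥ M *ᵥ x) * √(y ⬝ᵥ M *ᵥ y) := by
  classical
  have hsymm : y ⬝ᵥ M *ᵥ x = x ⬝ᵥ M *ᵥ y := by
    rw [← dotProduct_transpose_mulVec, (isHermitian_iff_isSymm.mp hM.isHermitian).eq]
  have hcs := (toBilin' M).apply_mul_apply_le_of_forall_zero_le
    (by simpa only [toBilin'_apply'] using hM.dotProduct_mulVec_self_nonneg) x y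
  simp only [toBilin'_apply', hsymm, ← sq] at hcs
  rw [← Real.sqrt_mul (hM.dotProduct_mulVec_self_nonneg x)]
  exact (le_abs_self _).trans (Real.abs_le_sqrt hcs)

lemma PosDef.dotProduct_le_sqrt_mul_sqrt_inv [DecidableEq ι] {N : Matrix ι ι ℝ}
    (hN : N.PosDef) (z x : ι → ℝ) : z ⬝ᵥ x ≤ √(z ⬝ᵥ N *ᵥ z) * √(x ⬝ᵥ N⁻¹ *ᵥ x) := by
  have hx : N *ᵥ (N⁻¹ *ᵥ x) = x := by
    rw [mulVec_mulVec, mul_nonsing_inv _ ((isUnit_iff_isUnit_det N).mp hN.isUnit), one_mulVec]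
  have hp : N⁻¹ *ᵥ x ⬝ᵥ x = x ⬝ᵥ N⁻¹ *ᵥ x := dotProduct_comm _ _
  simpa only [hx, hp] using hN.posSemidef.dotProduct_mulVec_le_sqrt_mul_sqrt z (N⁻¹ *ᵥ x)

lemma range_mulVecLin_le_ker_dotProduct {E : Matrix ι κ ℝ} {v : ι → ℝ} (hv : Eᵀ *ᵥ v = 0) :
    LinearMap.range E.mulVecLin ≤ LinearMap.ker (dotProductBilin ℝ ℝ v) := by
  rintro _ ⟨x, rfl⟩
  simp [← dotProduct_transpose_mulVec, hv]

lemma _root_.Real.sqrt_mul_sqrt_add_sqrt_mul_sqrt_le {a b c d : ℝ} (ha : 0 ≤ a) (hb : 0 ≤ b)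
    (hc : 0 ≤ c) (hd : 0 ≤ d) : √a * √b + √c * √d ≤ √(a + c) * √(b + d) := by
  simpa [Fin.sum_univ_two] using Real.sum_sqrt_mul_sqrt_le Finset.univ (f := ![a, c])
    (g := ![b, d]) (Fin.forall_fin_two.mpr ⟨ha, hc⟩) (Fin.forall_fin_two.mpr ⟨hb, hd⟩)

/-- Hypothesis (H0) for the pair `(M, N)` with constants `(c₀, c₁)`. -/
structure CoerciveBounded (M N : Matrix ι ι ℝ) (c₀ c₁ : ℝ) : Prop where
  coercive : ∀ v, c₀ * (v ⬝ᵥ N *ᵥ v) ≤ v ⬝ᵥ M *ᵥ v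
  bounded : ∀ v w, w ⬝ᵥ M *ᵥ v ≤ c₁ * √(v ⬝ᵥ N *ᵥ v) * √(w ⬝ᵥ N *ᵥ w)

namespace CoerciveBounded

variable {M N : Matrix ι ι ℝ} {c₀ c₁ : ℝ}

lemma zero : CoerciveBounded (0 : Matrix ι ι ℝ) 0 c₀ c₁ where
  coercive v := by simp
  bounded v w := by simp

lemma add {M' N' : Matrix ι ι ℝ} (h : CoerciveBounded M N c₀ c₁)
    (h' : CoerciveBounded M' N' c₀ c₁) (hN : N.PosSemidef) (hN' : N'.PosSemidef)
    (hc₁ : 0 ≤ c₁) : CoerciveBounded (M + M') (N + N') c₀ c₁ where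
  coercive v := by
    simpa only [add_mulVec, dotProduct_add, mul_add] using
      add_le_add (h.coercive v) (h'.coercive v)
  bounded v w := by
    simp only [add_mulVec, dotProduct_add]
    calc w ⬝ᵥ M *ᵥ v + w ⬝ᵥ M' *ᵥ v
        ≤ c₁ * √(v ⬝ᵥ N *ᵥ v) * √(w ⬝ᵥ N *ᵥ w) + c₁ * √(v ⬝ᵥ N' *ᵥ v) * √(w ⬝ᵥ N' *ᵥ w) :=
          add_le_add (h.bounded v w) (h'.bounded v w)
      _ = c₁ * (√(v ⬝ᵥ N *ᵥ v) * √(w ⬝ᵥ N *ᵥ w) + √(v ⬝ᵥ N' *ᵥ v) * √(w ⬝ᵥ N' *ᵥ w)) := by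
          ring
      _ ≤ c₁ * (√(v ⬝ᵥ N *ᵥ v + v ⬝ᵥ N' *ᵥ v) * √(w ⬝ᵥ N *ᵥ w + w ⬝ᵥ N' *ᵥ w)) := by
          gcongr
          exact Real.sqrt_mul_sqrt_add_sqrt_mul_sqrt_le (hN.dotProduct_mulVec_self_nonneg v)
            (hN.dotProduct_mulVec_self_nonneg w) (hN'.dotProduct_mulVec_self_nonneg v)
            (hN'.dotProduct_mulVec_self_nonneg w)
      _ = _ := by ring

lemma sum {M N : σ → Matrix ι ι ℝ} (s : Finset σ)
    (h : ∀ k ∈ s, CoerciveBounded (M k) (N k) c₀ c₁) (hN : ∀ k ∈ s, (N k).PosSemidef)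
    (hc₁ : 0 ≤ c₁) : CoerciveBounded (∑ k ∈ s, M k) (∑ k ∈ s, N k) c₀ c₁ := by
  classical
  induction s using Finset.induction_on with
  | empty => simpa using zero
  | insert k s hk ih =>
    simp only [Finset.mem_insert, forall_eq_or_imp] at h hN
    rw [Finset.sum_insert hk, Finset.sum_insert hk]
    exact h.1.add (ih h.2 hN.2) hN.1 (posSemidef_sum s hN.2) hc₁

lemma transpose_mul_mul (h : CoerciveBounded M N c₀ c₁) (E : Matrix ι κ ℝ) :
    CoerciveBounded (Eᵀ * M * E) (Eᵀ * N * E) c₀ c₁ where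
  coercive v := by simpa only [dotProduct_transpose_mul_mul_mulVec] using h.coercive (E *ᵥ v)
  bounded v w := by
    simpa only [dotProduct_transpose_mul_mul_mulVec] using h.bounded (E *ᵥ v) (E *ᵥ w)

lemma mul_mul_transpose {M N : Matrix κ κ ℝ} (h : CoerciveBounded M N c₀ c₁)
    (E : Matrix ι κ ℝ) : CoerciveBounded (E * M * Eᵀ) (E * N * Eᵀ) c₀ c₁ := by
  simpa only [transpose_transpose] using h.transpose_mul_mul Eᵀ

variable [DecidableEq ι]

lemma isUnit (h : CoerciveBounded M N c₀ c₁) (hN : N.PosDef) (hc₀ : 0 < c₀) : IsUnit M := by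
  rw [← mulVec_injective_iff_isUnit, ← coe_mulVecLin, injective_iff_map_eq_zero]
  intro v hv
  by_contra hv₀
  have hpos : 0 < v ⬝ᵥ N *ᵥ v := by simpa using hN.dotProduct_mulVec_pos hv₀
  have hcoer := h.coercive v
  rw [← mulVecLin_apply M, hv, dotProduct_zero] at hcoer
  nlinarith

lemma mul_sqrt_le_sqrt_inv (h : CoerciveBounded M N c₀ c₁) (hN : N.PosDef) (u : ι → ℝ) :
    c₀ * √(u ⬝ᵥ N *ᵥ u) ≤ √(M *ᵥ u ⬝ᵥ N⁻¹ *ᵥ (M *ᵥ u)) := by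
  set s := √(u ⬝ᵥ N *ᵥ u)
  set t := √(M *ᵥ u ⬝ᵥ N⁻¹ *ᵥ (M *ᵥ u))
  have hs : s ^ 2 = u ⬝ᵥ N *ᵥ u := Real.sq_sqrt (hN.posSemidef.dotProduct_mulVec_self_nonneg u)
  have key : s * (c₀ * s) ≤ s * t := calc
    s * (c₀ * s) = c₀ * (u ⬝ᵥ N *ᵥ u) := by rw [← hs]; ring
    _ ≤ u ⬝ᵥ M *ᵥ u := h.coercive u
    _ ≤ s * t := hN.dotProduct_le_sqrt_mul_sqrt_inv u (M *ᵥ u)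
  have hs_nonneg : 0 ≤ s := Real.sqrt_nonneg _
  rcases hs_nonneg.eq_or_lt with hs₀ | hs₀
  · rw [← hs₀, mul_zero]
    exact Real.sqrt_nonneg _
  · exact le_of_mul_le_mul_left key hs₀

lemma inv_dotProduct_mulVec_le (h : CoerciveBounded M N c₀ c₁) (hN : N.PosDef) (u : ι → ℝ) :
    M *ᵥ u ⬝ᵥ N⁻¹ *ᵥ (M *ᵥ u) ≤ c₁ ^ 2 * (u ⬝ᵥ N *ᵥ u) := by
  set x := M *ᵥ u
  set p := N⁻¹ *ᵥ x
  have hp : N *ᵥ p = x := by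
    rw [mulVec_mulVec, mul_nonsing_inv _ ((isUnit_iff_isUnit_det N).mp hN.isUnit), one_mulVec]
  have hnonneg := hN.posSemidef.dotProduct_mulVec_self_nonneg
  set s := √(u ⬝ᵥ N *ᵥ u)
  set t := √(x ⬝ᵥ p)
  have ht : t ^ 2 = x ⬝ᵥ p := Real.sq_sqrt (by rw [← hp, dotProduct_comm]; exact hnonneg p)
  have key : t ^ 2 ≤ c₁ * s * t := calc
    t ^ 2 = p ⬝ᵥ M *ᵥ u := by rw [ht, dotProduct_comm]
    _ ≤ c₁ * s * √(p ⬝ᵥ N *ᵥ p) := h.bounded u p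
    _ = c₁ * s * t := by rw [hp, dotProduct_comm]
  rw [← ht, ← Real.sq_sqrt (hnonneg u), ← mul_pow]
  nlinarith [sq_nonneg (c₁ * s - t)]

lemma inv (h : CoerciveBounded M N c₀ c₁) (hN : N.PosDef) (hc₀ : 0 < c₀) :
    CoerciveBounded M⁻¹ N⁻¹ (c₀ / c₁ ^ 2) (1 / c₀) := by
  have hM : ∀ x, M *ᵥ (M⁻¹ *ᵥ x) = x := fun x => by
    rw [mulVec_mulVec, mul_nonsing_inv _ ((isUnit_iff_isUnit_det M).mp (h.isUnit hN hc₀)),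
      one_mulVec]
  constructor
  · intro x
    set u := M⁻¹ *ᵥ x
    have hform : x ⬝ᵥ M⁻¹ *ᵥ x = u ⬝ᵥ M *ᵥ u := by rw [hM, dotProduct_comm]
    calc c₀ / c₁ ^ 2 * (x ⬝ᵥ N⁻¹ *ᵥ x)
        ≤ c₀ / c₁ ^ 2 * (c₁ ^ 2 * (u ⬝ᵥ N *ᵥ u)) := by
          gcongr
          simpa only [u, hM] using h.inv_dotProduct_mulVec_le hN u
      -- `c₁ ^ 2 / c₁ ^ 2` is `0`, not `1`, when `c₁ = 0`
      _ = c₀ * (u ⬝ᵥ N *ᵥ u) * (c₁ ^ 2 / c₁ ^ 2) := by ring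
      _ ≤ c₀ * (u ⬝ᵥ N *ᵥ u) :=
          mul_le_of_le_one_right
            (mul_nonneg hc₀.le (hN.posSemidef.dotProduct_mulVec_self_nonneg u))
            (div_self_le_one _)
      _ ≤ x ⬝ᵥ M⁻¹ *ᵥ x := hform ▸ h.coercive u
  · intro x y
    set u := M⁻¹ *ᵥ x
    calc y ⬝ᵥ u = u ⬝ᵥ y := dotProduct_comm _ _
      _ ≤ √(u ⬝ᵥ N *ᵥ u) * √(y ⬝ᵥ N⁻¹ *ᵥ y) := hN.dotProduct_le_sqrt_mul_sqrt_inv u y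
      _ ≤ (1 / c₀ * √(x ⬝ᵥ N⁻¹ *ᵥ x)) * √(y ⬝ᵥ N⁻¹ *ᵥ y) := by
          gcongr
          rw [div_mul_eq_mul_div, one_mul, le_div_iff₀ hc₀, mul_comm]
          simpa only [u, hM] using h.mul_sqrt_le_sqrt_inv hN u

end CoerciveBounded

variable [DecidableEq κ]

noncomputable def subspaceCorrection (M : Matrix ι ι ℝ) (E : Matrix ι κ ℝ) : Matrix ι ι ℝ :=
  E * (Eᵀ * M * E)⁻¹ * Eᵀ

/-- The additive Schwarz operator `C = B⁻¹` with coarse space `P` and subdomains `I k`. -/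
noncomputable def additiveSchwarz [Fintype σ] {τ : σ → Type*} [∀ k, Fintype (τ k)]
    [∀ k, DecidableEq (τ k)] (M : Matrix ι ι ℝ) (P : Matrix ι κ ℝ)
    (I : ∀ k, Matrix ι (τ k) ℝ) : Matrix ι ι ℝ :=
  subspaceCorrection M P + ∑ k, subspaceCorrection M (I k)

variable {M N : Matrix ι ι ℝ} {E : Matrix ι κ ℝ}

lemma posSemidef_subspaceCorrection (hN : N.PosSemidef) (E : Matrix ι κ ℝ) :
    (subspaceCorrection N E).PosSemidef := by
  simpa [subspaceCorrection] using
    (hN.conjTranspose_mul_mul_same E).inv.mul_mul_conjTranspose_same E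

lemma transpose_mulVec_eq_zero_of_subspaceCorrection (hN : N.PosDef)
    (hE : Function.Injective E.mulVec) {v : ι → ℝ}
    (hv : v ⬝ᵥ subspaceCorrection N E *ᵥ v = 0) : Eᵀ *ᵥ v = 0 := by
  have hW : (Eᵀ * N * E).PosDef := by simpa using hN.conjTranspose_mul_mul_same hE
  by_contra hv₀
  have hpos : 0 < Eᵀ *ᵥ v ⬝ᵥ (Eᵀ * N * E)⁻¹ *ᵥ (Eᵀ *ᵥ v) := by
    simpa using hW.inv.dotProduct_mulVec_pos hv₀
  rw [subspaceCorrection, dotProduct_mul_mul_transpose_mulVec] at hv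
  exact hpos.ne' hv

lemma CoerciveBounded.subspaceCorrection [DecidableEq ι] {c₀ c₁ : ℝ}
    (h : CoerciveBounded M N c₀ c₁) (hN : N.PosDef) (hc₀ : 0 < c₀)
    (hE : Function.Injective E.mulVec) :
    CoerciveBounded (subspaceCorrection M E) (subspaceCorrection N E) (c₀ / c₁ ^ 2) (1 / c₀) :=
  (h.transpose_mul_mul E).inv (by simpa using hN.conjTranspose_mul_mul_same hE) hc₀
    |>.mul_mul_transpose E

variable [Fintype σ] {τ : σ → Type*} [∀ k, Fintype (τ k)] [∀ k, DecidableEq (τ k)]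
  {P : Matrix ι κ ℝ} {I : ∀ k, Matrix ι (τ k) ℝ}

lemma posDef_additiveSchwarz [DecidableEq ι] (hN : N.PosDef)
    (hP : Function.Injective P.mulVec) (hI : ∀ k, Function.Injective (I k).mulVec)
    (hspan : LinearMap.range P.mulVecLin ⊔ ⨆ k, LinearMap.range (I k).mulVecLin = ⊤) :
    (additiveSchwarz N P I).PosDef := by
  have hP₀ := posSemidef_subspaceCorrection hN.posSemidef P
  have hI₀ k := posSemidef_subspaceCorrection hN.posSemidef (I k)
  have hC₀ : (additiveSchwarz N P I).PosSemidef := hP₀.add (posSemidef_sum _ fun k _ => hI₀ k)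
  refine .of_dotProduct_mulVec_pos hC₀.isHermitian fun v hv => ?_
  rw [star_trivial]
  refine (hC₀.dotProduct_mulVec_self_nonneg v).lt_of_ne fun h₀ => hv ?_
  rw [additiveSchwarz, add_mulVec, dotProduct_add, sum_mulVec, dotProduct_sum, eq_comm,
    add_eq_zero_iff_of_nonneg (hP₀.dotProduct_mulVec_self_nonneg v)
      (Finset.sum_nonneg fun k _ => (hI₀ k).dotProduct_mulVec_self_nonneg v),
    Finset.sum_eq_zero_iff_of_nonneg fun k _ => (hI₀ k).dotProduct_mulVec_self_nonneg v]
    at h₀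
  have hperp : (⊤ : Submodule ℝ (ι → ℝ)) ≤ LinearMap.ker (dotProductBilin ℝ ℝ v) :=
    hspan ▸ sup_le
      (range_mulVecLin_le_ker_dotProduct
        (transpose_mulVec_eq_zero_of_subspaceCorrection hN hP h₀.1))
      (iSup_le fun k => range_mulVecLin_le_ker_dotProduct
        (transpose_mulVec_eq_zero_of_subspaceCorrection hN (hI k) (h₀.2 k (Finset.mem_univ k))))
  simpa using hperp (Submodule.mem_top (x := v))

lemma CoerciveBounded.additiveSchwarz [DecidableEq ι] {c₀ c₁ : ℝ}
    (h : CoerciveBounded M N c₀ c₁) (hN : N.PosDef) (hc₀ : 0 < c₀)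
    (hP : Function.Injective P.mulVec) (hI : ∀ k, Function.Injective (I k).mulVec) :
    CoerciveBounded (additiveSchwarz M P I) (additiveSchwarz N P I) (c₀ / c₁ ^ 2) (1 / c₀) := by
  have hpsd : ∀ k ∈ Finset.univ, (Matrix.subspaceCorrection N (I k)).PosSemidef :=
    fun k _ => posSemidef_subspaceCorrection hN.posSemidef (I k)
  exact (h.subspaceCorrection hN hc₀ hP).add
    (.sum _ (fun k _ => h.subspaceCorrection hN hc₀ (hI k)) hpsd (by positivity))
    (posSemidef_subspaceCorrection hN.posSemidef P) (posSemidef_sum _ hpsd) (by positivity)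

end Matrix

theorem stmt_7_general {n nc Ns : ℕ} (A A0 : Matrix (Fin n) (Fin n) ℝ) (c0 c1 : ℝ)
    (hc0 : 0 < c0) (hA0 : A0.PosDef)
    (hcoer : ∀ v : Fin n → ℝ, c0 * (v ⬝ᵥ A0.mulVec v) ≤ v ⬝ᵥ A.mulVec v)
    (hbdd : ∀ v w : Fin n → ℝ, w ⬝ᵥ A.mulVec v ≤
      c1 * Real.sqrt (v ⬝ᵥ A0.mulVec v) * Real.sqrt (w ⬝ᵥ A0.mulVec w))
    (P : Matrix (Fin n) (Fin nc) ℝ)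
    (nk : Fin Ns → ℕ) (I : ∀ k : Fin Ns, Matrix (Fin n) (Fin (nk k)) ℝ)
    (hP : Function.Injective P.mulVec)
    (hI : ∀ k, Function.Injective (I k).mulVec)
    (hspan : (LinearMap.range P.mulVecLin ⊔
      ⨆ k, LinearMap.range (I k).mulVecLin) = ⊤) :
    letI C : Matrix (Fin n) (Fin n) ℝ :=
      P * (Pᵀ * A * P)⁻¹ * Pᵀ + ∑ k, I k * ((I k)ᵀ * A * I k)⁻¹ * (I k)ᵀ
    letI C0 : Matrix (Fin n) (Fin n) ℝ :=
      P * (Pᵀ * A0 * P)⁻¹ * Pᵀ + ∑ k, I k * ((I k)ᵀ * A0 * I k)⁻¹ * (I k)ᵀ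
    C0.PosDef ∧
    (∀ v : Fin n → ℝ, (c0 / c1 ^ 2) * (v ⬝ᵥ C0.mulVec v) ≤ v ⬝ᵥ C.mulVec v) ∧
    (∀ v w : Fin n → ℝ, w ⬝ᵥ C.mulVec v ≤
      (1 / c0) * Real.sqrt (v ⬝ᵥ C0.mulVec v) * Real.sqrt (w ⬝ᵥ C0.mulVec w)) := by
  have hC : CoerciveBounded (additiveSchwarz A P I) (additiveSchwarz A0 P I) (c0 / c1 ^ 2)
      (1 / c0) := CoerciveBounded.additiveSchwarz ⟨hcoer, hbdd⟩ hA0 hc0 hP hI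
  exact ⟨posDef_additiveSchwarz hA0 hP hI hspan, hC.coercive, hC.bounded⟩

/-- If (A, A0) satisfies (H0) with constants (c0, c1), P and the Iₖ are
full-column-rank matrices whose column spaces together span ℝⁿ, and C, C0 are the
additive Schwarz operators built from A and A0 respectively, then C0 is symmetric
positive definite and (C, C0) satisfies (H0) with constants (c0/c1², 1/c0). -/
theorem stmt_7 {n nc Ns : ℕ} (A A0 : Matrix (Fin n) (Fin n) ℝ) (c0 c1 : ℝ)
    (hc0 : 0 < c0) (hc1 : 0 < c1) (hA0 : A0.PosDef)
    (hcoer : ∀ v : Fin n → ℝ, c0 * (v ⬝ᵥ A0.mulVec v) ≤ v ⬝ᵥ A.mulVec v)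
    (hbdd : ∀ v w : Fin n → ℝ, w ⬝ᵥ A.mulVec v ≤
      c1 * Real.sqrt (v ⬝ᵥ A0.mulVec v) * Real.sqrt (w ⬝ᵥ A0.mulVec w))
    (P : Matrix (Fin n) (Fin nc) ℝ)
    (nk : Fin Ns → ℕ) (I : ∀ k : Fin Ns, Matrix (Fin n) (Fin (nk k)) ℝ)
    (hP : Function.Injective P.mulVec)
    (hI : ∀ k, Function.Injective (I k).mulVec)
    (hspan : (LinearMap.range P.mulVecLin ⊔
      ⨆ k, LinearMap.range (I k).mulVecLin) = ⊤) :
    letI C : Matrix (Fin n) (Fin n) ℝ :=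
      P * (Pᵀ * A * P)⁻¹ * Pᵀ + ∑ k, I k * ((I k)ᵀ * A * I k)⁻¹ * (I k)ᵀ
    letI C0 : Matrix (Fin n) (Fin n) ℝ :=
      P * (Pᵀ * A0 * P)⁻¹ * Pᵀ + ∑ k, I k * ((I k)ᵀ * A0 * I k)⁻¹ * (I k)ᵀ
    C0.PosDef ∧
    (∀ v : Fin n → ℝ, (c0 / c1 ^ 2) * (v ⬝ᵥ C0.mulVec v) ≤ v ⬝ᵥ C.mulVec v) ∧
    (∀ v w : Fin n → ℝ, w ⬝ᵥ C.mulVec v ≤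
      (1 / c0) * Real.sqrt (v ⬝ᵥ C0.mulVec v) * Real.sqrt (w ⬝ᵥ C0.mulVec w)) :=
  stmt_7_general A A0 c0 c1 hc0 hA0 hcoer hbdd P nk I hP hI hspan
end

section
/- Let A, B, Z be real n×n matrices with A and B invertible and Z symmetric positive definite, and suppose the pair (A, Z) satisfies hypothesis (H0) with constants (α0, α1). Equip ℝⁿ with the norm ‖v‖_{Z⁻¹} = √(vᵀZ⁻¹v). Then for every r ∈ ℝⁿ there exist coefficients α, σ ∈ ℝ such that ‖r − A(α·B⁻¹ + σ·Z⁻¹)r‖²_{Z⁻¹} ≤ (1 − α0²/α1²)·‖r‖²_{Z⁻¹}; in particular, inf_{α,σ ∈ ℝ} ‖r − A(α·B⁻¹ + σ·Z⁻¹)r‖_{Z⁻¹} ≤ inf_{σ ∈ ℝ} ‖r − σ·A Z⁻¹ r‖_{Z⁻¹}. -/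
open Matrix

/-! The combined preconditioner contains, for `α = 0`, every Richardson step `σ • Z⁻¹`, so it
suffices to bound the residual of the single step `σ = α0 / α1²`. Writing `u = Z⁻¹ r` and
`s = A u`, the expansion of `‖r - σ s‖²_{Z⁻¹}` involves `‖r‖²_{Z⁻¹} = uᵀ Z u`, the cross term
`uᵀ A u ≥ α0 uᵀ Z u` (coercivity) and `‖s‖²_{Z⁻¹} ≤ α1² uᵀ Z u` (boundedness tested against
`w = Z⁻¹ s`, for which `wᵀ Z w = ‖s‖²_{Z⁻¹}`). -/

lemma le_sq_mul_of_le_mul_sqrt_mul_sqrt {q N a : ℝ} (hq : 0 ≤ q) (hN : 0 ≤ N)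
    (h : q ≤ a * √N * √q) : q ≤ a ^ 2 * N := by
  rcases hq.eq_or_lt with rfl | hq_pos
  · exact mul_nonneg (sq_nonneg a) hN
  have hsqrt : √q ≤ a * √N := by
    refine le_of_mul_le_mul_right ?_ (Real.sqrt_pos.2 hq_pos)
    rwa [Real.mul_self_sqrt hq]
  calc q = √q ^ 2 := (Real.sq_sqrt hq).symm
    _ ≤ (a * √N) ^ 2 := pow_le_pow_left₀ (Real.sqrt_nonneg q) hsqrt 2
    _ = a ^ 2 * N := by rw [mul_pow, Real.sq_sqrt hN]

lemma sub_two_mul_add_sq_mul_le {N P q α0 α1 : ℝ} (hα0 : 0 ≤ α0) (hP : α0 * N ≤ P)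
    (hq : q ≤ α1 ^ 2 * N) :
    N - 2 * (α0 / α1 ^ 2) * P + (α0 / α1 ^ 2) ^ 2 * q ≤ (1 - α0 ^ 2 / α1 ^ 2) * N := by
  -- with `x / 0 = 0` this also holds for `α1 = 0`, both sides being `0`
  have hσα1 : (α0 / α1 ^ 2) ^ 2 * α1 ^ 2 = α0 ^ 2 / α1 ^ 2 := by
    rcases eq_or_ne α1 0 with rfl | hα1
    · simp
    · field_simp
  calc N - 2 * (α0 / α1 ^ 2) * P + (α0 / α1 ^ 2) ^ 2 * q
      ≤ N - 2 * (α0 / α1 ^ 2) * (α0 * N) + (α0 / α1 ^ 2) ^ 2 * (α1 ^ 2 * N) := by gcongr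
    _ = (1 - α0 ^ 2 / α1 ^ 2) * N := by
      linear_combination N * hσα1

namespace Matrix

variable {ι R : Type*} [Fintype ι]

lemma IsSymm.dotProduct_mulVec_comm [CommSemiring R] {M : Matrix ι ι R} (hM : M.IsSymm)
    (v w : ι → R) : v ⬝ᵥ M *ᵥ w = w ⬝ᵥ M *ᵥ v := by
  rw [dotProduct_mulVec, ← mulVec_transpose, hM.eq, dotProduct_comm]

lemma IsSymm.sub_smul_dotProduct_mulVec_sub_smul [CommRing R] {M : Matrix ι ι R}
    (hM : M.IsSymm) (r s : ι → R) (σ : R) :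
    (r - σ • s) ⬝ᵥ M *ᵥ (r - σ • s) =
      r ⬝ᵥ M *ᵥ r - 2 * σ * (r ⬝ᵥ M *ᵥ s) + σ ^ 2 * (s ⬝ᵥ M *ᵥ s) := by
  simp only [mulVec_sub, mulVec_smul, sub_dotProduct, dotProduct_sub, smul_dotProduct,
    dotProduct_smul, smul_eq_mul, hM.dotProduct_mulVec_comm s r]
  ring

variable [DecidableEq ι] {A Z : Matrix ι ι ℝ}

theorem PosDef.richardson_residual_le (hZ : Z.PosDef) {α0 α1 : ℝ} (hα0 : 0 ≤ α0)
    (hcoer : ∀ v, α0 * (v ⬝ᵥ Z *ᵥ v) ≤ v ⬝ᵥ A *ᵥ v)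
    (hbdd : ∀ v w, w ⬝ᵥ A *ᵥ v ≤ α1 * √(v ⬝ᵥ Z *ᵥ v) * √(w ⬝ᵥ Z *ᵥ w)) (r : ι → ℝ) :
    (r - (α0 / α1 ^ 2) • (A * Z⁻¹) *ᵥ r) ⬝ᵥ Z⁻¹ *ᵥ (r - (α0 / α1 ^ 2) • (A * Z⁻¹) *ᵥ r) ≤
      (1 - α0 ^ 2 / α1 ^ 2) * (r ⬝ᵥ Z⁻¹ *ᵥ r) := by
  have hZinv : Z⁻¹.IsSymm := isHermitian_iff_isSymm.1 hZ.inv.isHermitian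
  have hZ_mul_inv : Z * Z⁻¹ = 1 := mul_nonsing_inv Z hZ.det_pos.ne'.isUnit
  have hZ_nonneg (v : ι → ℝ) : 0 ≤ v ⬝ᵥ Z *ᵥ v := by
    simpa using hZ.posSemidef.dotProduct_mulVec_nonneg v
  rw [← mulVec_mulVec, hZinv.sub_smul_dotProduct_mulVec_sub_smul]
  set u := Z⁻¹ *ᵥ r
  set s := A *ᵥ u
  set w := Z⁻¹ *ᵥ s
  have hZu : Z *ᵥ u = r := by rw [mulVec_mulVec, hZ_mul_inv, one_mulVec]
  have hZw : Z *ᵥ w = s := by rw [mulVec_mulVec, hZ_mul_inv, one_mulVec]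
  have hN : r ⬝ᵥ u = u ⬝ᵥ Z *ᵥ u := by rw [hZu, dotProduct_comm]
  have hP : r ⬝ᵥ Z⁻¹ *ᵥ s = u ⬝ᵥ A *ᵥ u := by
    rw [hZinv.dotProduct_mulVec_comm, dotProduct_comm]
  have hq : s ⬝ᵥ w ≤ α1 ^ 2 * (u ⬝ᵥ Z *ᵥ u) := by
    refine le_sq_mul_of_le_mul_sqrt_mul_sqrt ?_ (hZ_nonneg u) ?_
    · simpa only [hZw, dotProduct_comm] using hZ_nonneg w
    · rw [dotProduct_comm]
      simpa only [hZw] using hbdd u w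
  rw [hN, hP]
  exact sub_two_mul_add_sq_mul_le hα0 (hcoer u) hq

end Matrix

theorem stmt_14_general {n : ℕ} (A B Z : Matrix (Fin n) (Fin n) ℝ) (α0 α1 : ℝ)
    (hα0 : 0 < α0) (hZ : Z.PosDef)
    (hcoer : ∀ v : Fin n → ℝ, α0 * (v ⬝ᵥ Z.mulVec v) ≤ v ⬝ᵥ A.mulVec v)
    (hbdd : ∀ v w : Fin n → ℝ, w ⬝ᵥ A.mulVec v ≤
      α1 * Real.sqrt (v ⬝ᵥ Z.mulVec v) * Real.sqrt (w ⬝ᵥ Z.mulVec w)) :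
    ∀ r : Fin n → ℝ,
      (∃ α σ : ℝ,
        (r - (A * (α • B⁻¹ + σ • Z⁻¹)).mulVec r) ⬝ᵥ
            Z⁻¹.mulVec (r - (A * (α • B⁻¹ + σ • Z⁻¹)).mulVec r) ≤
          (1 - α0 ^ 2 / α1 ^ 2) * (r ⬝ᵥ Z⁻¹.mulVec r)) ∧
      (⨅ p : ℝ × ℝ,
          Real.sqrt ((r - (A * (p.1 • B⁻¹ + p.2 • Z⁻¹)).mulVec r) ⬝ᵥ
            Z⁻¹.mulVec (r - (A * (p.1 • B⁻¹ + p.2 • Z⁻¹)).mulVec r))) ≤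
        ⨅ σ : ℝ,
          Real.sqrt ((r - σ • (A * Z⁻¹).mulVec r) ⬝ᵥ
            Z⁻¹.mulVec (r - σ • (A * Z⁻¹).mulVec r)) := by
  intro r
  have hrichardson (σ : ℝ) : (A * ((0 : ℝ) • B⁻¹ + σ • Z⁻¹)) *ᵥ r = σ • (A * Z⁻¹) *ᵥ r := by
    rw [zero_smul, zero_add, Matrix.mul_smul, smul_mulVec]
  refine ⟨⟨0, α0 / α1 ^ 2, ?_⟩, ?_⟩
  · rw [hrichardson]
    exact hZ.richardson_residual_le hα0.le hcoer hbdd r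
  · refine ciInf_mono_of_forall_exists ⟨0, ?_⟩ fun σ => ⟨(0, σ), ?_⟩
    · rintro _ ⟨p, rfl⟩
      exact Real.sqrt_nonneg _
    · simp only [hrichardson, le_refl]

/-- If A, B are invertible, Z is symmetric positive definite and (A, Z)
satisfies (H0) with constants (α0, α1), then for every r there are coefficients
α, σ ∈ ℝ with ‖r − A(α·B⁻¹ + σ·Z⁻¹)r‖²_{Z⁻¹} ≤ (1 − α0²/α1²)·‖r‖²_{Z⁻¹}; in
particular the infimum over (α, σ) is bounded by the infimum over σ of
‖r − σ·AZ⁻¹r‖_{Z⁻¹}. -/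
theorem stmt_14 {n : ℕ} (A B Z : Matrix (Fin n) (Fin n) ℝ) (α0 α1 : ℝ)
    (hα0 : 0 < α0) (hα1 : 0 < α1) (hA : IsUnit A) (hB : IsUnit B) (hZ : Z.PosDef)
    (hcoer : ∀ v : Fin n → ℝ, α0 * (v ⬝ᵥ Z.mulVec v) ≤ v ⬝ᵥ A.mulVec v)
    (hbdd : ∀ v w : Fin n → ℝ, w ⬝ᵥ A.mulVec v ≤
      α1 * Real.sqrt (v ⬝ᵥ Z.mulVec v) * Real.sqrt (w ⬝ᵥ Z.mulVec w)) :
    ∀ r : Fin n → ℝ,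
      (∃ α σ : ℝ,
        (r - (A * (α • B⁻¹ + σ • Z⁻¹)).mulVec r) ⬝ᵥ
            Z⁻¹.mulVec (r - (A * (α • B⁻¹ + σ • Z⁻¹)).mulVec r) ≤
          (1 - α0 ^ 2 / α1 ^ 2) * (r ⬝ᵥ Z⁻¹.mulVec r)) ∧
      (⨅ p : ℝ × ℝ,
          Real.sqrt ((r - (A * (p.1 • B⁻¹ + p.2 • Z⁻¹)).mulVec r) ⬝ᵥ
            Z⁻¹.mulVec (r - (A * (p.1 • B⁻¹ + p.2 • Z⁻¹)).mulVec r))) ≤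
        ⨅ σ : ℝ,
          Real.sqrt ((r - σ • (A * Z⁻¹).mulVec r) ⬝ᵥ
            Z⁻¹.mulVec (r - σ • (A * Z⁻¹).mulVec r)) :=
  stmt_14_general A B Z α0 α1 hα0 hZ hcoer hbdd
end
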